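/- arXiv:1111.0057 — 2 statements merged into one kernel-verified Lean document; each statement's English description precedes it below -/
import Mathlib

section
/- Let (λ_{d,i})_{d∈ℕ, i∈ℕ} be nonnegative real numbers such that for each d the sequence i ↦ λ_{d,i} is nonincreasing and λ_{d,1} > 0. (i) If there exist constants C, p > 0 and q ≥ 0 such that for all d ∈ ℕ and all ε' ∈ (0,1] the set {i ∈ ℕ : λ_{d,i} > (ε')²·λ_{d,1}} is finite with at most C·(ε')^{−p}·d^q elements, then for every τ > p/2 one has sup_{d∈ℕ} d^{−2q/p} · ( Σ_{i=1}^∞ (λ_{d,i}/λ_{d,1})^τ )^{1/τ} ≤ ( 1 + C + C^{2τ/p}·ζ(2τ/p) )^{1/τ} < ∞, where ζ is the Riemann zeta function. (ii) Conversely, if for some r ≥ 0, τ > 0, C > 0 and q ≥ 0, setting f(d) = ⌈C·d^q⌉, the quantity C_τ = sup_{d∈ℕ} d^{−r} · ( Σ_{i≥f(d)} (λ_{d,i}/λ_{d,1})^τ )^{1/τ} is finite, then for every d ∈ ℕ and every ε' ∈ (0,1] the set {i ∈ ℕ : λ_{d,i} > (ε')²·λ_{d,1}} is finite with at most (C + C_τ^τ)·(ε')^{−2τ}·d^{max(q,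 rτ)} elements. -/
open scoped ENNReal

noncomputable section

/-!
(i) Monotonicity gives `n ≤ #{i : λ_{d,i} > ε² λ_{d,1}}` as soon as `ε² λ_{d,1} < λ_{d,n}`, so the
bound `C ε^{-p} d^q` on these counts forces the decay `λ_{d,n} / λ_{d,1} ≤ (C d^q / n)^{2/p}` for
every `n ≥ 1`. Raised to the power `τ` and summed, this is dominated by
`C^{2τ/p} ζ(2τ/p) d^{2qτ/p}`, which is finite since `2τ/p > 1`.

(ii) Of the indices with `λ_{d,i} > ε² λ_{d,1}`, fewer than `⌈C d^q⌉` lie below the cut-off, and by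
Markov's inequality at most `ε^{-2τ}` times the tail sum lie beyond it; the definition of `C_τ`
bounds that tail sum by `C_τ^τ d^{rτ}`.
-/

/-- The Riemann zeta function at a real argument, as `∑_{n=1}^∞ n^{-s}` in `[0,∞]`. -/
def zetaSum (s : ℝ) : ℝ≥0∞ := ∑' n : ℕ, ((n : ℝ≥0∞) + 1) ^ (-s)

theorem zetaSum_lt_top {s : ℝ} (hs : 1 < s) : zetaSum s < ∞ := by
  have hsum : Summable fun n : ℕ => ((n + 1 : ℕ) : ℝ) ^ (-s) :=
    (summable_nat_add_iff 1).2 (Real.summable_nat_rpow.2 (by linarith))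
  have hterm (n : ℕ) : ((n : ℝ≥0∞) + 1) ^ (-s) = ENNReal.ofReal (((n + 1 : ℕ) : ℝ) ^ (-s)) := by
    rw [← ENNReal.ofReal_rpow_of_pos (by positivity), ENNReal.ofReal_natCast, Nat.cast_succ]
  simp only [zetaSum, hterm, ← ENNReal.ofReal_tsum_of_nonneg (fun n => by positivity) hsum,
    ENNReal.ofReal_lt_top]

theorem le_ncard_setOf_lt {a : ℕ → ℝ} (ha : ∀ i j, 1 ≤ i → i ≤ j → a j ≤ a i) {t : ℝ}
    (hfin : {i | 1 ≤ i ∧ t < a i}.Finite) {n : ℕ} (ht : t < a n) :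
    n ≤ {i | 1 ≤ i ∧ t < a i}.ncard := by
  have hsub : Set.Icc 1 n ⊆ {i | 1 ≤ i ∧ t < a i} :=
    fun i hi => ⟨hi.1, ht.trans_le (ha i n hi.1 hi.2)⟩
  simpa using Set.ncard_le_ncard hsub hfin

theorem div_le_rpow_of_ncard_le {a : ℕ → ℝ} (ha : ∀ i j, 1 ≤ i → i ≤ j → a j ≤ a i)
    (ha1 : 0 < a 1) {x p : ℝ} (hx : 0 < x) (hp : 0 < p)
    (H : ∀ ε : ℝ, 0 < ε → ε ≤ 1 → {i | 1 ≤ i ∧ ε ^ 2 * a 1 < a i}.Finite ∧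
      ({i | 1 ≤ i ∧ ε ^ 2 * a 1 < a i}.ncard : ℝ) ≤ x * ε ^ (-p))
    {n : ℕ} (hn : 1 ≤ n) : a n / a 1 ≤ (x / n) ^ (2 / p) := by
  have hxn : 0 < x / n := div_pos hx (by exact_mod_cast hn)
  by_contra! hlt
  have hy1 : a n / a 1 ≤ 1 := (div_le_one ha1).2 (ha 1 n le_rfl hn)
  have hsqrt : (x / n) ^ p⁻¹ < √(a n / a 1) := by
    calc (x / n) ^ p⁻¹ = √((x / n) ^ (2 / p)) := by
          rw [Real.sqrt_eq_rpow, ← Real.rpow_mul hxn.le]; ring_nf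
      _ < √(a n / a 1) := Real.sqrt_lt_sqrt (by positivity) hlt
  obtain ⟨ε, hxε, hεy⟩ := exists_between hsqrt
  have hε0 : 0 < ε := (Real.rpow_pos_of_pos hxn _).trans hxε
  obtain ⟨hfin, hcard⟩ := H ε hε0 (hεy.le.trans (Real.sqrt_le_one.2 hy1))
  have hεn : ε ^ 2 * a 1 < a n := by
    rw [← lt_div_iff₀ ha1]; exact (Real.lt_sqrt hε0.le).1 hεy
  have hn_le : (n : ℝ) ≤ x * ε ^ (-p) :=
    (Nat.cast_le.2 (le_ncard_setOf_lt ha hfin hεn)).trans hcard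
  have hlt_n : x * ε ^ (-p) < n := by
    rw [Real.rpow_inv_lt_iff_of_pos hxn.le hε0.le hp, div_lt_iff₀ (by positivity)] at hxε
    rwa [Real.rpow_neg hε0.le, ← div_eq_mul_inv, div_lt_iff₀ (by positivity), mul_comm]
  exact hlt_n.not_ge hn_le

theorem ENNReal.ofReal_div_rpow {x m : ℝ} (hx : 0 < x) (hm : 0 < m) (s : ℝ) :
    ENNReal.ofReal ((x / m) ^ s) = ENNReal.ofReal x ^ s * ENNReal.ofReal m ^ (-s) := by
  rw [Real.div_rpow hx.le hm.le, div_eq_mul_inv, ← Real.rpow_neg hm.le,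
    ENNReal.ofReal_mul (by positivity), ENNReal.ofReal_rpow_of_pos hx,
    ENNReal.ofReal_rpow_of_pos hm]

theorem tsum_ofReal_rpow_le_mul_zetaSum {b : ℕ → ℝ} {x σ τ : ℝ} (hx : 0 < x) (hτ : 0 ≤ τ)
    (hb : ∀ n, 1 ≤ n → b n ≤ (x / n) ^ σ) :
    ∑' i : {i : ℕ // 1 ≤ i}, ENNReal.ofReal (b i) ^ τ ≤
      ENNReal.ofReal x ^ (σ * τ) * zetaSum (σ * τ) := by
  rw [zetaSum, ← ENNReal.tsum_mul_left]
  calc ∑' i : {i : ℕ // 1 ≤ i}, ENNReal.ofReal (b i) ^ τ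
      = ∑' n : ℕ, ENNReal.ofReal (b (n + 1)) ^ τ :=
        tsum_pnat_eq_tsum_succ (f := fun n => ENNReal.ofReal (b n) ^ τ)
    _ ≤ ∑' n : ℕ, ENNReal.ofReal x ^ (σ * τ) * ((n : ℝ≥0∞) + 1) ^ (-(σ * τ)) := by
      gcongr with n
      have hn : (0 : ℝ) < (n + 1 : ℕ) := by positivity
      calc ENNReal.ofReal (b (n + 1)) ^ τ
          ≤ ENNReal.ofReal ((x / (n + 1 : ℕ)) ^ σ) ^ τ := by gcongr; exact hb _ n.succ_pos
        _ = ENNReal.ofReal ((x / (n + 1 : ℕ)) ^ (σ * τ)) := by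
          rw [ENNReal.ofReal_rpow_of_pos (by positivity), ← Real.rpow_mul (by positivity)]
        _ = _ := by rw [ENNReal.ofReal_div_rpow hx hn, ENNReal.ofReal_natCast, Nat.cast_succ]

theorem ENNReal.rpow_neg_mul_rpow_one_div_le_iff {D S K : ℝ≥0∞} (hD0 : D ≠ 0) (hD : D ≠ ∞) {e τ : ℝ}
    (hτ : 0 < τ) : D ^ (-e) * S ^ (1 / τ) ≤ K ↔ S ≤ K ^ τ * D ^ (e * τ) := by
  rw [ENNReal.rpow_neg, ENNReal.inv_mul_le_iff (by simp [hD0, hD]) (by simp [hD0, hD]), one_div,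
    ENNReal.rpow_inv_le_iff hτ, ENNReal.mul_rpow_of_nonneg _ _ hτ.le, ← ENNReal.rpow_mul, mul_comm]

theorem ENNReal.ncard_setOf_le_le_tsum_div {ι : Type*} {g : ι → ℝ≥0∞} (hg : ∑' i, g i ≠ ∞)
    {c : ℝ≥0∞} (hc : c ≠ 0) :
    {i | c ≤ g i}.Finite ∧ ({i | c ≤ g i}.ncard : ℝ≥0∞) ≤ (∑' i, g i) / c := by
  obtain ⟨hfin, hcard⟩ := ENNReal.finset_card_const_le_le_of_tsum_le hg le_rfl hc
  exact ⟨hfin, by rwa [Set.ncard_eq_toFinset_card _ hfin]⟩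

theorem ncard_le_of_tsum_tail_ne_top {a : ℕ → ℝ} (ha1 : 0 < a 1) {t τ : ℝ} (ht : 0 < t)
    (hτ : 0 ≤ τ) (f : ℕ)
    (hS : ∑' i : {i : ℕ // f ≤ i}, ENNReal.ofReal (a i / a 1) ^ τ ≠ ∞) :
    {i | 1 ≤ i ∧ t * a 1 < a i}.Finite ∧
      ({i | 1 ≤ i ∧ t * a 1 < a i}.ncard : ℝ) ≤
        (f - 1 : ℕ) + (∑' i : {i : ℕ // f ≤ i}, ENNReal.ofReal (a i / a 1) ^ τ).toReal / t ^ τ := by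
  set g : ℕ → ℝ≥0∞ := {i | f ≤ i}.indicator fun i => ENNReal.ofReal (a i / a 1) ^ τ
  have hgS : ∑' i, g i = ∑' i : {i : ℕ // f ≤ i}, ENNReal.ofReal (a i / a 1) ^ τ :=
    (tsum_subtype {i | f ≤ i} _).symm
  have hc : ENNReal.ofReal (t ^ τ) ≠ 0 := by simpa using Real.rpow_pos_of_pos ht τ
  have hg : ∑' i, g i ≠ ∞ := hgS ▸ hS
  obtain ⟨hfin, hcard⟩ := ENNReal.ncard_setOf_le_le_tsum_div hg hc
  have hsub : {i | 1 ≤ i ∧ t * a 1 < a i} ⊆ Set.Ico 1 f ∪ {i | ENNReal.ofReal (t ^ τ) ≤ g i} := by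
    rintro i ⟨hi1, hit⟩
    by_cases hfi : f ≤ i
    · right
      change _ ≤ g i
      rw [show g i = _ from Set.indicator_of_mem (show i ∈ {i | f ≤ i} from hfi) _,
        ← ENNReal.ofReal_rpow_of_pos ht]
      exact ENNReal.rpow_le_rpow (ENNReal.ofReal_le_ofReal ((lt_div_iff₀ ha1).2 hit).le) hτ
    · exact Or.inl ⟨hi1, not_le.1 hfi⟩
  have hfin' := (Set.finite_Ico 1 f).union hfin
  refine ⟨hfin'.subset hsub, ?_⟩
  have hlarge : ({i | ENNReal.ofReal (t ^ τ) ≤ g i}.ncard : ℝ) ≤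
      (∑' i : {i : ℕ // f ≤ i}, ENNReal.ofReal (a i / a 1) ^ τ).toReal / t ^ τ := by
    have := ENNReal.toReal_mono (ENNReal.div_ne_top hg hc) hcard
    rwa [ENNReal.toReal_div, ENNReal.toReal_ofReal (by positivity), hgS,
      ENNReal.toReal_natCast] at this
  calc ({i | 1 ≤ i ∧ t * a 1 < a i}.ncard : ℝ)
      ≤ ((Set.Ico 1 f).ncard + {i | ENNReal.ofReal (t ^ τ) ≤ g i}.ncard : ℕ) := by
        exact_mod_cast (Set.ncard_le_ncard hsub hfin').trans (Set.ncard_union_le _ _)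
    _ ≤ _ := by
        rw [Nat.cast_add, Set.ncard_Ico_nat]
        exact add_le_add le_rfl hlarge

theorem rpow_neg_mul_tsum_rpow_le_of_ncard_le {a : ℕ → ℝ}
    (ha : ∀ i j, 1 ≤ i → i ≤ j → a j ≤ a i) (ha1 : 0 < a 1) {C p q τ : ℝ} (hC : 0 < C)
    (hp : 0 < p) (hτ : 0 < τ) {d : ℕ} (hd : 1 ≤ d)
    (H : ∀ ε : ℝ, 0 < ε → ε ≤ 1 → {i | 1 ≤ i ∧ ε ^ 2 * a 1 < a i}.Finite ∧
      ({i | 1 ≤ i ∧ ε ^ 2 * a 1 < a i}.ncard : ℝ) ≤ C * ε ^ (-p) * (d : ℝ) ^ q) :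
    (d : ℝ≥0∞) ^ (-(2 * q / p)) *
        (∑' i : {i : ℕ // 1 ≤ i}, ENNReal.ofReal (a i / a 1) ^ τ) ^ (1 / τ)
      ≤ (ENNReal.ofReal C ^ (2 * τ / p) * zetaSum (2 * τ / p)) ^ (1 / τ) := by
  have hd0 : (0 : ℝ) < d := by exact_mod_cast hd
  have hx : 0 < C * (d : ℝ) ^ q := by positivity
  have hdecay (n : ℕ) (hn : 1 ≤ n) : a n / a 1 ≤ (C * (d : ℝ) ^ q / n) ^ (2 / p) :=
    div_le_rpow_of_ncard_le ha ha1 hx hp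
      (fun ε hε0 hε1 => by simpa only [mul_right_comm] using H ε hε0 hε1) hn
  rw [ENNReal.rpow_neg_mul_rpow_one_div_le_iff (Nat.cast_ne_zero.2 (by omega)) (by simp) hτ,
    ← ENNReal.rpow_mul, one_div_mul_cancel hτ.ne', ENNReal.rpow_one]
  calc _ ≤ ENNReal.ofReal (C * (d : ℝ) ^ q) ^ (2 / p * τ) * zetaSum (2 / p * τ) :=
        tsum_ofReal_rpow_le_mul_zetaSum hx hτ.le hdecay
    _ = _ := by
        rw [ENNReal.ofReal_mul hC.le, ← ENNReal.ofReal_rpow_of_pos hd0, ENNReal.ofReal_natCast,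
          ENNReal.mul_rpow_of_nonneg _ _ (by positivity), ← ENNReal.rpow_mul]
        ring_nf

theorem ncard_le_of_rpow_neg_mul_tsum_tail_le {a : ℕ → ℝ} (ha1 : 0 < a 1) {r τ C q ε : ℝ}
    (hτ : 0 < τ) (hC : 0 ≤ C) {d : ℕ} (hd : 1 ≤ d) (hε0 : 0 < ε) (hε1 : ε ≤ 1) {K : ℝ≥0∞}
    (hK : K ≠ ∞)
    (hle : (d : ℝ≥0∞) ^ (-r) *
      (∑' i : {i : ℕ // ⌈C * (d : ℝ) ^ q⌉₊ ≤ i}, ENNReal.ofReal (a i / a 1) ^ τ) ^ (1 / τ) ≤ K) :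
    {i | 1 ≤ i ∧ ε ^ 2 * a 1 < a i}.Finite ∧
      ({i | 1 ≤ i ∧ ε ^ 2 * a 1 < a i}.ncard : ℝ) ≤
        (C + K.toReal ^ τ) * ε ^ (-(2 * τ)) * (d : ℝ) ^ (max q (r * τ)) := by
  set S := ∑' i : {i : ℕ // ⌈C * (d : ℝ) ^ q⌉₊ ≤ i}, ENNReal.ofReal (a i / a 1) ^ τ
  have hd1 : (1 : ℝ) ≤ d := by exact_mod_cast hd
  have hD0 : (d : ℝ≥0∞) ≠ 0 := Nat.cast_ne_zero.2 (by omega)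
  have hS : S ≤ K ^ τ * (d : ℝ≥0∞) ^ (r * τ) :=
    (ENNReal.rpow_neg_mul_rpow_one_div_le_iff hD0 (by simp) hτ).1 hle
  have hRHS : K ^ τ * (d : ℝ≥0∞) ^ (r * τ) ≠ ∞ :=
    ENNReal.mul_ne_top (ENNReal.rpow_ne_top_of_nonneg hτ.le hK)
      (ENNReal.rpow_ne_top_of_ne_zero hD0 (by simp))
  obtain ⟨hfin, hcard⟩ := ncard_le_of_tsum_tail_ne_top ha1 (t := ε ^ 2) (by positivity) hτ.le
    ⌈C * (d : ℝ) ^ q⌉₊ (ne_top_of_le_ne_top hRHS hS)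
  refine ⟨hfin, hcard.trans ?_⟩
  have hhead : ((⌈C * (d : ℝ) ^ q⌉₊ - 1 : ℕ) : ℝ) ≤ C * (d : ℝ) ^ q := by
    refine le_trans ?_ (Nat.floor_le (by positivity))
    exact_mod_cast Nat.sub_le_iff_le_add.2 (Nat.ceil_le_floor_add_one _)
  have htail : S.toReal ≤ K.toReal ^ τ * (d : ℝ) ^ (r * τ) := by
    simpa [ENNReal.toReal_mul, ← ENNReal.toReal_rpow] using ENNReal.toReal_mono hRHS hS
  have hεpow : (ε ^ 2) ^ τ = ε ^ (2 * τ) := by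
    rw [← Real.rpow_natCast, ← Real.rpow_mul hε0.le, Nat.cast_ofNat]
  have hε : 1 ≤ ε ^ (-(2 * τ)) :=
    Real.one_le_rpow_of_pos_of_le_one_of_nonpos hε0 hε1 (by linarith)
  have hdq : (d : ℝ) ^ q ≤ (d : ℝ) ^ (max q (r * τ)) :=
    Real.rpow_le_rpow_of_exponent_le hd1 (le_max_left _ _)
  have hdrτ : (d : ℝ) ^ (r * τ) ≤ (d : ℝ) ^ (max q (r * τ)) :=
    Real.rpow_le_rpow_of_exponent_le hd1 (le_max_right _ _)
  calc _ ≤ C * (d : ℝ) ^ q + K.toReal ^ τ * (d : ℝ) ^ (r * τ) * ε ^ (-(2 * τ)) := by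
        rw [hεpow, Real.rpow_neg hε0.le, ← div_eq_mul_inv]
        gcongr
    _ ≤ C * (ε ^ (-(2 * τ)) * (d : ℝ) ^ (max q (r * τ))) +
          K.toReal ^ τ * (d : ℝ) ^ (max q (r * τ)) * ε ^ (-(2 * τ)) := by
        gcongr
        exact hdq.trans (le_mul_of_one_le_left (by positivity) hε)
    _ = _ := by ring

theorem stmt_13_general
    (Λ : ℕ → ℕ → ℝ)
    (hmono : ∀ d i j : ℕ, 1 ≤ i → i ≤ j → Λ d j ≤ Λ d i)
    (hpos : ∀ d : ℕ, 1 ≤ d → 0 < Λ d 1) :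
    -- (i) polynomial tractability implies summability of the normalized eigenvalues
    (∀ C p q : ℝ, 0 < C → 0 < p → 0 ≤ q →
      (∀ d : ℕ, 1 ≤ d → ∀ ε' : ℝ, 0 < ε' → ε' ≤ 1 →
        {i : ℕ | 1 ≤ i ∧ ε' ^ 2 * Λ d 1 < Λ d i}.Finite ∧
        ({i : ℕ | 1 ≤ i ∧ ε' ^ 2 * Λ d 1 < Λ d i}.ncard : ℝ) ≤
          C * ε' ^ (-p) * (d : ℝ) ^ q) →
      ∀ τ : ℝ, p / 2 < τ →
        (∀ d : ℕ, 1 ≤ d →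
          ((d : ℝ≥0∞) ^ (-(2 * q / p))) *
            (∑' i : {i : ℕ // 1 ≤ i},
              ENNReal.ofReal (Λ d i.1 / Λ d 1) ^ τ) ^ (1 / τ)
          ≤ (1 + ENNReal.ofReal C +
              ENNReal.ofReal C ^ (2 * τ / p) * zetaSum (2 * τ / p)) ^ (1 / τ)) ∧
        (1 + ENNReal.ofReal C +
          ENNReal.ofReal C ^ (2 * τ / p) * zetaSum (2 * τ / p)) ^ (1 / τ) < ∞) ∧
    -- (ii) summability of the normalized tails implies polynomial tractability
    (∀ r τ C q : ℝ, 0 ≤ r → 0 < τ → 0 < C → 0 ≤ q →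
      ∀ Cτ : ℝ≥0∞,
        Cτ = (⨆ d : {d : ℕ // 1 ≤ d},
          ((d.1 : ℝ≥0∞) ^ (-r)) *
            (∑' i : {i : ℕ // ⌈C * (d.1 : ℝ) ^ q⌉₊ ≤ i},
              ENNReal.ofReal (Λ d.1 i.1 / Λ d.1 1) ^ τ) ^ (1 / τ)) →
        Cτ ≠ ∞ →
        ∀ d : ℕ, 1 ≤ d → ∀ ε' : ℝ, 0 < ε' → ε' ≤ 1 →
          {i : ℕ | 1 ≤ i ∧ ε' ^ 2 * Λ d 1 < Λ d i}.Finite ∧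
          ({i : ℕ | 1 ≤ i ∧ ε' ^ 2 * Λ d 1 < Λ d i}.ncard : ℝ) ≤
            (C + Cτ.toReal ^ τ) * ε' ^ (-(2 * τ)) * (d : ℝ) ^ (max q (r * τ))) := by
  refine ⟨fun C p q hC hp _ H τ hτ => ?_,
    fun r τ C q _ hτ hC _ Cτ hCτ hCτ_ne_top d hd ε hε0 hε1 => ?_⟩
  · have hτ0 : 0 < τ := by linarith
    have hs : 1 < 2 * τ / p := by rw [lt_div_iff₀ hp]; linarith
    refine ⟨fun d hd => ?_, ENNReal.rpow_lt_top_of_nonneg (by positivity) ?_⟩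
    · exact (rpow_neg_mul_tsum_rpow_le_of_ncard_le (hmono d) (hpos d hd) hC hp hτ0 hd
        (H d hd)).trans (ENNReal.rpow_le_rpow le_add_self (by positivity))
    · exact ENNReal.add_ne_top.2 ⟨by simp, ENNReal.mul_ne_top
        (ENNReal.rpow_ne_top_of_nonneg (by positivity) ENNReal.ofReal_ne_top)
        (zetaSum_lt_top hs).ne⟩
  · exact ncard_le_of_rpow_neg_mul_tsum_tail_le (hpos d hd) hτ hC.le hd hε0 hε1 hCτ_ne_top
      (hCτ ▸ le_iSup_of_le ⟨d, hd⟩ le_rfl)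

/-- A version of Theorem 5.2 of Novak–Woźniakowski (normalized error criterion).
`Λ d i` is the `i`-th largest eigenvalue of `T_d† T_d`, and
`#{i : λ_{d,i} > (ε')² λ_{d,1}}` is the information complexity `n(ε'·√λ_{d,1}, d)`. -/
theorem stmt_13
    (Λ : ℕ → ℕ → ℝ)
    (hnn : ∀ d i : ℕ, 0 ≤ Λ d i)
    (hmono : ∀ d i j : ℕ, 1 ≤ i → i ≤ j → Λ d j ≤ Λ d i)
    (hpos : ∀ d : ℕ, 1 ≤ d → 0 < Λ d 1) :
    -- (i) polynomial tractability implies summability of the normalized eigenvalues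
    (∀ C p q : ℝ, 0 < C → 0 < p → 0 ≤ q →
      (∀ d : ℕ, 1 ≤ d → ∀ ε' : ℝ, 0 < ε' → ε' ≤ 1 →
        {i : ℕ | 1 ≤ i ∧ ε' ^ 2 * Λ d 1 < Λ d i}.Finite ∧
        ({i : ℕ | 1 ≤ i ∧ ε' ^ 2 * Λ d 1 < Λ d i}.ncard : ℝ) ≤
          C * ε' ^ (-p) * (d : ℝ) ^ q) →
      ∀ τ : ℝ, p / 2 < τ →
        (∀ d : ℕ, 1 ≤ d →
          ((d : ℝ≥0∞) ^ (-(2 * q / p))) *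
            (∑' i : {i : ℕ // 1 ≤ i},
              ENNReal.ofReal (Λ d i.1 / Λ d 1) ^ τ) ^ (1 / τ)
          ≤ (1 + ENNReal.ofReal C +
              ENNReal.ofReal C ^ (2 * τ / p) * zetaSum (2 * τ / p)) ^ (1 / τ)) ∧
        (1 + ENNReal.ofReal C +
          ENNReal.ofReal C ^ (2 * τ / p) * zetaSum (2 * τ / p)) ^ (1 / τ) < ∞) ∧
    -- (ii) summability of the normalized tails implies polynomial tractability
    (∀ r τ C q : ℝ, 0 ≤ r → 0 < τ → 0 < C → 0 ≤ q →
      ∀ Cτ : ℝ≥0∞,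
        Cτ = (⨆ d : {d : ℕ // 1 ≤ d},
          ((d.1 : ℝ≥0∞) ^ (-r)) *
            (∑' i : {i : ℕ // ⌈C * (d.1 : ℝ) ^ q⌉₊ ≤ i},
              ENNReal.ofReal (Λ d.1 i.1 / Λ d.1 1) ^ τ) ^ (1 / τ)) →
        Cτ ≠ ∞ →
        ∀ d : ℕ, 1 ≤ d → ∀ ε' : ℝ, 0 < ε' → ε' ≤ 1 →
          {i : ℕ | 1 ≤ i ∧ ε' ^ 2 * Λ d 1 < Λ d i}.Finite ∧
          ({i : ℕ | 1 ≤ i ∧ ε' ^ 2 * Λ d 1 < Λ d i}.ncard : ℝ) ≤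
            (C + Cτ.toReal ^ τ) * ε' ^ (-(2 * τ)) * (d : ℝ) ^ (max q (r * τ))) :=
  stmt_13_general Λ hmono hpos
end
end

section
/- Let λ = (λ_m)_{m≥1} be a nonincreasing sequence of strictly positive reals with λ_m → 0 as m → ∞, and define n^{asy}(ε,d) = #{ k ∈ ℕ^d : k_1 < k_2 < … < k_d and ∏_{l=1}^d λ_{k_l} > ε² } and n^{ent}(δ,1) = #{ m ∈ ℕ : λ_m > δ² }. Then for every d ≥ 2 and every ε with ε² < λ_1·λ_2·…·λ_d one has the lower bound n^{asy}(ε,d) ≥ n^{ent}( ε / √(λ_1·λ_2·…·λ_{d−1}), 1 ) − d + 1. -/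
/-- `n^{ent}(δ,1) = #{ m ∈ ℕ : λ_m > δ² }`, the univariate information complexity. -/
noncomputable def nEnt (Λ : ℕ → ℝ) (δ : ℝ) : ℕ :=
  {m : ℕ | 1 ≤ m ∧ δ ^ 2 < Λ m}.ncard

/-- `n^{asy}(ε,d)`, the information complexity of the fully antisymmetric problem. -/
noncomputable def nAsy (Λ : ℕ → ℝ) (ε : ℝ) (d : ℕ) : ℕ :=
  {k : Fin d → ℕ | (∀ i, 1 ≤ k i) ∧ StrictMono k ∧ ε ^ 2 < ∏ l, Λ (k l)}.ncard

/-- Lower bound for the information complexity of the fully antisymmetric tensor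
product problem in terms of a univariate complexity:
`n^{asy}(ε,d) ≥ n^{ent}(ε/√(λ₁⋯λ_{d−1}),1) − d + 1` whenever `ε² < λ₁⋯λ_d`. -/
theorem stmt_19
    (Λ : ℕ → ℝ) (hpos : ∀ m : ℕ, 1 ≤ m → 0 < Λ m)
    (hmono : ∀ m n : ℕ, 1 ≤ m → m ≤ n → Λ n ≤ Λ m)
    (hlim : Filter.Tendsto Λ Filter.atTop (nhds 0)) :
    ∀ d : ℕ, 2 ≤ d → ∀ ε : ℝ, 0 < ε → ε ^ 2 < ∏ l ∈ Finset.Icc 1 d, Λ l →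
      (nEnt Λ (ε / Real.sqrt (∏ l ∈ Finset.Icc 1 (d - 1), Λ l)) : ℤ) - d + 1 ≤
        (nAsy Λ ε d : ℤ) := by
  intro d hd ε hε _hεd
  obtain ⟨n, rfl⟩ : ∃ n, d = n + 1 := ⟨d - 1, by omega⟩
  have hn : 1 ≤ n := by omega
  set P : ℝ := ∏ l ∈ Finset.Icc 1 (n + 1 - 1), Λ l with hPdef
  have hP : 0 < P := Finset.prod_pos (fun l hl => hpos l (Finset.mem_Icc.mp hl).1)
  have hδsq : (ε / Real.sqrt P) ^ 2 = ε ^ 2 / P := by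
    rw [div_pow, Real.sq_sqrt hP.le]
  have hδpos : 0 < ε ^ 2 / P := div_pos (pow_pos hε 2) hP
  obtain ⟨N, hN⟩ := Metric.tendsto_atTop.mp hlim (ε ^ 2 / P) hδpos
  have hNlt : ∀ m, N ≤ m → Λ m < ε ^ 2 / P := by
    intro m hm
    have h := hN m hm
    rw [Real.dist_eq, sub_zero] at h
    exact lt_of_le_of_lt (le_abs_self _) h
  -- product of Λ (i+1) over Fin n equals P
  have hPfin : ∏ i : Fin n, Λ (i.val + 1) = P := by
    rw [hPdef, Nat.add_sub_cancel, ← Finset.Ico_add_one_right_eq_Icc, Finset.prod_Ico_eq_prod_range,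
      Fin.prod_univ_eq_prod_range (fun i => Λ (i + 1))]
    simp [add_comm]
  -- lower bound for strictly monotone sequences starting at ≥ 1
  have hlow' : ∀ (k : Fin (n + 1) → ℕ), (∀ i, 1 ≤ k i) → StrictMono k →
      ∀ j (hj : j < n + 1), j + 1 ≤ k ⟨j, hj⟩ := by
    intro k h1 hsm j
    induction j with
    | zero => exact fun _ => h1 _
    | succ m ih =>
      intro hj
      have hm : m < n + 1 := by omega
      have h2 := ih hm
      have h3 : k ⟨m, hm⟩ < k ⟨m + 1, hj⟩ :=
        hsm (show (⟨m, hm⟩ : Fin (n + 1)) < ⟨m + 1, hj⟩ by simp [Fin.lt_def])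
      omega
  have hlow : ∀ (k : Fin (n + 1) → ℕ), (∀ i, 1 ≤ k i) → StrictMono k →
      ∀ i : Fin (n + 1), i.val + 1 ≤ k i := by
    intro k h1 hsm i
    have := hlow' k h1 hsm i.val i.isLt
    simpa using this
  -- upper bound for the product
  have hub : ∀ (k : Fin (n + 1) → ℕ), (∀ i, 1 ≤ k i) → StrictMono k →
      ∏ l, Λ (k l) ≤ P * Λ (k (Fin.last n)) := by
    intro k h1 hsm
    rw [Fin.prod_univ_castSucc]
    refine mul_le_mul_of_nonneg_right ?_ (hpos _ (h1 _)).le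
    calc ∏ i : Fin n, Λ (k i.castSucc) ≤ ∏ i : Fin n, Λ (i.val + 1) :=
          Finset.prod_le_prod (fun i _ => (hpos _ (h1 _)).le)
            (fun i _ => hmono (i.val + 1) (k i.castSucc) (by omega)
              (hlow k h1 hsm i.castSucc))
      _ = P := hPfin
  -- the sets
  set T : Set (Fin (n + 1) → ℕ) :=
    {k | (∀ i, 1 ≤ k i) ∧ StrictMono k ∧ ε ^ 2 < ∏ l, Λ (k l)} with hT
  have hTfin : T.Finite := by
    apply Set.Finite.subset (Set.Finite.pi (fun _ : Fin (n + 1) => Set.finite_Iio N))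
    intro k hk
    obtain ⟨h1, hsm, hprod⟩ := hk
    have hlast : ε ^ 2 / P < Λ (k (Fin.last n)) := by
      rw [div_lt_iff₀ hP]
      calc ε ^ 2 < ∏ l, Λ (k l) := hprod
        _ ≤ P * Λ (k (Fin.last n)) := hub k h1 hsm
        _ = Λ (k (Fin.last n)) * P := mul_comm _ _
    have hlastN : k (Fin.last n) < N := by
      by_contra hc
      exact absurd (hNlt _ (by omega)) (not_lt.mpr hlast.le)
    intro i _
    exact lt_of_le_of_lt (hsm.monotone (Fin.le_last i)) hlastN
  set A : Set ℕ := {m | 1 ≤ m ∧ m ≤ n ∧ ε ^ 2 / P < Λ m} with hA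
  set B : Set ℕ := {m | n + 1 ≤ m ∧ ε ^ 2 / P < Λ m} with hB
  have hAfin : A.Finite := (Set.finite_Iic n).subset (fun m hm => hm.2.1)
  have hBfin : B.Finite := by
    apply (Set.finite_Iio N).subset
    intro m hm
    simp only [Set.mem_Iio]
    by_contra hc
    push_neg at hc
    exact absurd (hNlt m hc) (not_lt.mpr hm.2.le)
  have hAcard : A.ncard ≤ n := by
    calc A.ncard ≤ (Set.Icc 1 n).ncard :=
          Set.ncard_le_ncard (fun m hm => Set.mem_Icc.mpr ⟨hm.1, hm.2.1⟩)
            (Set.finite_Icc 1 n)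
      _ = n := by
          rw [← Finset.coe_Icc, Set.ncard_coe_finset, Nat.card_Icc]
          omega
  -- injection from B into T
  have hBcard : B.ncard ≤ T.ncard := by
    refine Set.ncard_le_ncard_of_injOn
      (fun m => fun i : Fin (n + 1) => if (i : ℕ) = n then m else i.val + 1)
      ?_ ?_ hTfin
    · intro m hm
      obtain ⟨hm1, hm2⟩ := hm
      refine ⟨?_, ?_, ?_⟩
      · intro i; dsimp only; split <;> omega
      · intro i j hij
        have hij' : i.val < j.val := hij
        have hjn : j.val ≤ n := by omega
        have hinn : i.val < n := by omega
        show (if (i : ℕ) = n then m else i.val + 1) < (if (j : ℕ) = n then m else j.val + 1)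
        split <;> split <;> omega
      · have heq : (∏ l, Λ ((fun i : Fin (n + 1) =>
            if (i : ℕ) = n then m else i.val + 1) l)) = P * Λ m := by
          rw [Fin.prod_univ_castSucc]
          congr 1
          · rw [← hPfin]
            apply Finset.prod_congr rfl
            intro i _
            have hne : (i : ℕ) ≠ n := Nat.ne_of_lt i.isLt
            simp [hne]
          · simp [Fin.last]
        rw [heq]
        rw [div_lt_iff₀ hP] at hm2
        linarith
    · intro m₁ _ m₂ _ h
      have := congrFun h (Fin.last n)
      simpa [Fin.last] using this
  -- put everything together
  have hEnt : nEnt Λ (ε / Real.sqrt P) ≤ n + T.ncard := by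
    have hEeq : {m : ℕ | 1 ≤ m ∧ (ε / Real.sqrt P) ^ 2 < Λ m} = A ∪ B := by
      ext m
      simp only [hA, hB, Set.mem_setOf_eq, Set.mem_union, hδsq]
      constructor
      · rintro ⟨h1, h2⟩
        rcases le_or_gt m n with h | h
        · exact Or.inl ⟨h1, h, h2⟩
        · exact Or.inr ⟨by omega, h2⟩
      · rintro (⟨h1, _, h2⟩ | ⟨h1, h2⟩) <;> exact ⟨by omega, h2⟩
    rw [nEnt, hEeq]
    calc (A ∪ B).ncard ≤ A.ncard + B.ncard := Set.ncard_union_le A B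
      _ ≤ n + T.ncard := Nat.add_le_add hAcard hBcard
  have hTeq : nAsy Λ ε (n + 1) = T.ncard := rfl
  rw [hTeq]
  omega
end
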